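/- arXiv:2006.02395 — 5 statements merged into one kernel-verified Lean document; each statement's English description precedes it below -/
import Mathlib

section
/- Let S be a finite subset of ℤ^n and let Δ, Δ' ⊆ S be two simplexes (subsets of cardinality n+1 not contained in an affine hyperplane) with equal barycenters b(Δ) = b(Δ'). Then b(Δ) is not a vertex (extreme point) of the barycentric polytope B(S), i.e., the convex hull of all barycenters of simplexes contained in S. -/
/-!
Lift each lattice point `p` to `(p, 1) ∈ ℚ^{n+1}`; simplexes in `S` become bases of `ℚ^{n+1}`.
By the symmetric basis exchange property there are `m ∈ Δ \ Δ'` and `m' ∈ Δ' \ Δ` such that both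
`Δ - m + m'` and `Δ' - m' + m` are again simplexes. Their barycenters are
`b(Δ) + (m' - m)/(n+1)` and `b(Δ') - (m' - m)/(n+1)`, so when `b(Δ) = b(Δ')` the point `b(Δ)` is
the midpoint of two distinct points of `B(S)`.
-/

def castQ {n : ℕ} (p : Fin n → ℤ) : Fin n → ℚ := fun i => (p i : ℚ)

/-- `Δ` is a simplex contained in `S`: a subset of cardinality `n+1`
not contained in an affine hyperplane (i.e. affinely independent). -/
def IsSimplexIn {n : ℕ} (S Δ : Finset (Fin n → ℤ)) : Prop :=
  Δ ⊆ S ∧ Δ.card = n + 1 ∧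
    AffineIndependent ℚ (fun p : {x // x ∈ Δ} => castQ (p : Fin n → ℤ))

/-- barycenter of a finite set of lattice points, viewed in `ℚ^n`. -/
noncomputable def bary {n : ℕ} (Δ : Finset (Fin n → ℤ)) : Fin n → ℚ :=
  ((n : ℚ) + 1)⁻¹ • ∑ p ∈ Δ, castQ p

open Submodule Set

theorem affineIndependent_iff_linearIndependent_prod_one {K V ι : Type*} [Ring K]
    [AddCommGroup V] [Module K V] (p : ι → V) :
    AffineIndependent K p ↔ LinearIndependent K (fun i => (p i, (1 : K))) := by
  have hsum (s : Finset ι) (w : ι → K) :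
      ∑ i ∈ s, w i • (p i, (1 : K)) = (∑ i ∈ s, w i • p i, ∑ i ∈ s, w i) := by
    ext <;> simp [Prod.fst_sum, Prod.snd_sum]
  rw [affineIndependent_iff, linearIndependent_iff']
  simp only [hsum, Prod.mk_eq_zero]
  exact ⟨fun h s w hw => h s w hw.2 hw.1, fun h s w hw₀ hw₁ => h s w ⟨hw₁, hw₀⟩⟩

theorem LinearIndepOn.exists_symm_exchange {K V ι : Type*} [DivisionRing K] [AddCommGroup V]
    [Module K V] {v : ι → V} {s t : Set ι} {a : ι} (hs : LinearIndepOn K v s)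
    (ht : LinearIndepOn K v t) (has : a ∈ s) (hat : a ∉ t) (hspan : v a ∈ span K (v '' t)) :
    ∃ b ∈ t, b ∉ s ∧ LinearIndepOn K v (insert b (s \ {a})) ∧
      LinearIndepOn K v (insert a (t \ {b})) := by
  set H := span K (v '' (s \ {a}))
  have haH : v a ∉ H := by
    have := hs
    rw [← insert_eq_of_mem has, ← insert_sdiff_singleton,
      linearIndepOn_insert (fun h => h.2 rfl)] at this
    exact this.2
  obtain ⟨l, hlt, hl⟩ := (Finsupp.mem_span_image_iff_linearCombination K).mp hspan
  obtain ⟨b, hbl, hbH⟩ : ∃ b ∈ l.support, v b ∉ H := by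
    by_contra! h
    rw [← hl, Finsupp.linearCombination_apply] at haH
    exact haH (sum_mem fun b hb => smul_mem _ _ (h b hb))
  have hbt : b ∈ t := hlt hbl
  have hba : b ≠ a := ne_of_mem_of_not_mem hbt hat
  refine ⟨b, hbt, fun hbs => hbH (subset_span ⟨b, ⟨hbs, hba⟩, rfl⟩),
    (hs.mono sdiff_subset).insert hbH, (ht.mono sdiff_subset).insert fun hmem => ?_⟩
  -- an expansion of `v a` over `t \ {b}` would, by uniqueness, be `l`, whose coefficient at `b`
  -- is nonzero
  obtain ⟨l', hl't, hl'⟩ := (Finsupp.mem_span_image_iff_linearCombination K).mp hmem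
  have hll' : l' = l := linearIndepOn_iffₛ.mp ht l' (Finsupp.supported_mono sdiff_subset hl't)
    l hlt (hl'.trans hl.symm)
  exact Finsupp.mem_support_iff.mp hbl (hll' ▸ Finsupp.notMem_support_iff.mp
    fun hb => (hl't hb).2 rfl)

theorem notMem_extremePoints_of_sub_mem_of_add_mem {𝕜 E : Type*} [Field 𝕜] [LinearOrder 𝕜]
    [IsStrictOrderedRing 𝕜] [AddCommGroup E] [Module 𝕜 E] {A : Set E} {x y : E} (hy : y ≠ 0)
    (hsub : x - y ∈ A) (hadd : x + y ∈ A) : x ∉ A.extremePoints 𝕜 := fun hx =>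
  hy (by simpa using hx.2 hsub hadd (mem_openSegment_sub_add x y))

theorem castQ_injective {n : ℕ} : Function.Injective (castQ (n := n)) := fun _ _ h =>
  funext fun i => Int.cast_injective (congrFun h i)

def homogenize {n : ℕ} (p : Fin n → ℤ) : (Fin n → ℚ) × ℚ := (castQ p, 1)

theorem isSimplexIn_iff_linearIndepOn {n : ℕ} {S Δ : Finset (Fin n → ℤ)} :
    IsSimplexIn S Δ ↔
      Δ ⊆ S ∧ Δ.card = n + 1 ∧ LinearIndepOn ℚ homogenize (Δ : Set (Fin n → ℤ)) := by
  rw [IsSimplexIn, affineIndependent_iff_linearIndependent_prod_one]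
  rfl

theorem IsSimplexIn.span_homogenize_eq_top {n : ℕ} {S Δ : Finset (Fin n → ℤ)}
    (hΔ : IsSimplexIn S Δ) : span ℚ (homogenize '' (Δ : Set (Fin n → ℤ))) = ⊤ := by
  obtain ⟨-, hcard, hind⟩ := isSimplexIn_iff_linearIndepOn.mp hΔ
  rw [image_eq_range]
  refine LinearIndependent.span_eq_top_of_card_eq_finrank' hind ?_
  simp [hcard, Module.finrank_prod]

theorem IsSimplexIn.insert_erase {n : ℕ} {S Δ : Finset (Fin n → ℤ)} {m m' : Fin n → ℤ}
    (hΔ : IsSimplexIn S Δ) (hm : m ∈ Δ) (hm'S : m' ∈ S) (hm'Δ : m' ∉ Δ)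
    (hind : LinearIndepOn ℚ homogenize (insert m' ((Δ : Set (Fin n → ℤ)) \ {m}))) :
    IsSimplexIn S (insert m' (Δ.erase m)) := by
  obtain ⟨hΔS, hcard, -⟩ := hΔ
  refine isSimplexIn_iff_linearIndepOn.mpr
    ⟨Finset.insert_subset hm'S ((Finset.erase_subset _ _).trans hΔS), ?_, by simpa using hind⟩
  rw [Finset.card_insert_of_notMem fun h => hm'Δ (Finset.mem_of_mem_erase h),
    Finset.card_erase_of_mem hm, hcard, Nat.add_sub_cancel]

theorem IsSimplexIn.exists_symm_exchange {n : ℕ} {S Δ Δ' : Finset (Fin n → ℤ)}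
    (hΔ : IsSimplexIn S Δ) (hΔ' : IsSimplexIn S Δ') {m : Fin n → ℤ} (hmΔ : m ∈ Δ)
    (hmΔ' : m ∉ Δ') :
    ∃ m' ∈ Δ', m' ∉ Δ ∧ IsSimplexIn S (insert m' (Δ.erase m)) ∧
      IsSimplexIn S (insert m (Δ'.erase m')) := by
  obtain ⟨m', hm'Δ', hm'Δ, hind, hind'⟩ :=
    (isSimplexIn_iff_linearIndepOn.mp hΔ).2.2.exists_symm_exchange
      (isSimplexIn_iff_linearIndepOn.mp hΔ').2.2 hmΔ hmΔ'
      (hΔ'.span_homogenize_eq_top ▸ mem_top)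
  exact ⟨m', hm'Δ', hm'Δ, hΔ.insert_erase hmΔ (hΔ'.1 hm'Δ') hm'Δ hind,
    hΔ'.insert_erase hm'Δ' (hΔ.1 hmΔ) hmΔ' hind'⟩

theorem bary_insert_erase {n : ℕ} {Δ : Finset (Fin n → ℤ)} {m m' : Fin n → ℤ} (hm : m ∈ Δ)
    (hm' : m' ∉ Δ) :
    bary (insert m' (Δ.erase m)) = bary Δ + ((n : ℚ) + 1)⁻¹ • (castQ m' - castQ m) := by
  rw [bary, bary, Finset.sum_insert (fun h => hm' (Finset.mem_of_mem_erase h)),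
    Finset.sum_erase_eq_sub hm, ← smul_add]
  congr 1
  abel

/-- If two distinct simplexes in `S` share a barycenter, then this barycenter is not
a vertex (extreme point) of the barycentric polytope `B(S)`. -/
theorem stmt_0 (n : ℕ) (S Δ Δ' : Finset (Fin n → ℤ))
    (hΔ : IsSimplexIn S Δ) (hΔ' : IsSimplexIn S Δ') (hne : Δ ≠ Δ')
    (hb : bary Δ = bary Δ') :
    bary Δ ∉ Set.extremePoints ℚ
      (convexHull ℚ {x : Fin n → ℚ | ∃ T, IsSimplexIn S T ∧ x = bary T}) := by
  have hΔΔ' : ¬Δ ⊆ Δ' := fun h =>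
    hne (Finset.eq_of_subset_of_card_le h (by rw [hΔ.2.1, hΔ'.2.1]))
  obtain ⟨m, hmΔ, hmΔ'⟩ := Finset.not_subset.mp hΔΔ'
  obtain ⟨m', hm'Δ', hm'Δ, hΔ₁, hΔ₂⟩ := hΔ.exists_symm_exchange hΔ' hmΔ hmΔ'
  have hy : ((n : ℚ) + 1)⁻¹ • (castQ m' - castQ m) ≠ 0 := smul_ne_zero (by positivity) <|
    sub_ne_zero.mpr (castQ_injective.ne (ne_of_mem_of_not_mem hm'Δ' hmΔ'))
  refine notMem_extremePoints_of_sub_mem_of_add_mem hy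
    (subset_convexHull ℚ _ ⟨_, hΔ₂, ?_⟩) (subset_convexHull ℚ _ ⟨_, hΔ₁, ?_⟩)
  · rw [bary_insert_erase hm'Δ' hmΔ', ← hb]
    module
  · rw [bary_insert_erase hmΔ hm'Δ]
end

section
/- Let Δ = {p_1,…,p_{n+1}} and Δ' = {p_1',…,p_{n+1}'} be two affinely independent subsets of ℚ^n with p_1 ∉ Δ'. Then there exists an index j such that both (Δ \ {p_1}) ∪ {p_j'} and (Δ' \ {p_j'}) ∪ {p_1} are affinely independent. -/
/-!
Since `Δ'` is `n + 1` affinely independent points of `ℚ^n`, it spans, so `p₁ = ∑ w_q q` with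
`∑ w_q = 1`. The point `p₁` lies off the hyperplane `H` spanned by `Δ \ {p₁}`, so some `q` with
`w_q ≠ 0` lies off `H` as well; adding `q` to `Δ \ {p₁}` keeps affine independence. By uniqueness
of barycentric coordinates, `w_q ≠ 0` also means `p₁` is off the span of `Δ' \ {q}`, so swapping `q`
for `p₁` in `Δ'` keeps affine independence too.
-/

variable {k V P : Type*} [DivisionRing k] [AddCommGroup V] [Module k V] [AddTorsor V P]

theorem AffineIndependent.insert_of_notMem_affineSpan {s : Set P}
    (hs : AffineIndependent k ((↑) : s → P)) {p : P} (hp : p ∉ affineSpan k s) :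
    AffineIndependent k ((↑) : ↥(insert p s) → P) := by
  let i : ↥(insert p s) := ⟨p, Set.mem_insert p s⟩
  let e : {x // x ≠ i} ↪ s :=
    ⟨fun x => ⟨x, (Set.mem_insert_iff.1 x.1.2).resolve_left fun h => x.2 (Subtype.ext h)⟩,
      fun x y h => Subtype.ext (Subtype.ext (congrArg Subtype.val h :))⟩
  refine (hs.comp_embedding e).affineIndependent_of_notMem_span (i := i) fun h => hp ?_
  refine affineSpan_mono k ?_ h
  rintro _ ⟨x, hx, rfl⟩
  exact (e ⟨x, hx⟩).2

theorem AffineIndependent.finset_insert_of_notMem_affineSpan [DecidableEq P] {s : Finset P}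
    (hs : AffineIndependent k ((↑) : s → P)) {p : P} (hp : p ∉ affineSpan k (s : Set P)) :
    AffineIndependent k ((↑) : ↥(insert p s) → P) := by
  have h := hs.insert_of_notMem_affineSpan hp
  rwa [← Finset.coe_insert] at h

theorem Finset.image_val_setOf_ne {α : Type*} [DecidableEq α] (s : Finset α) {a : α} (ha : a ∈ s) :
    Subtype.val '' {x : s | x ≠ ⟨a, ha⟩} = ↑(s.erase a) := by
  ext x; simp [and_comm]

theorem AffineIndependent.notMem_affineSpan_erase [DecidableEq P] {s : Finset P}
    (hs : AffineIndependent k ((↑) : s → P)) {p : P} (hp : p ∈ s) :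
    p ∉ affineSpan k ↑(s.erase p) := by
  rw [← s.image_val_setOf_ne hp]
  exact (hs.mem_affineSpan_iff ⟨p, hp⟩ _).not.2 (· rfl)

theorem AffineIndependent.exists_exchange [DecidableEq P] {s : Finset P}
    (hs : AffineIndependent k ((↑) : s → P)) {p : P} (hp : p ∈ affineSpan k (s : Set P))
    {H : AffineSubspace k P} (hpH : p ∉ H) :
    ∃ q ∈ s, q ∉ H ∧ p ∉ affineSpan k ↑(s.erase q) := by
  rw [← Subtype.range_coe (s := (s : Set P))] at hp
  obtain ⟨w, hw, rfl⟩ := eq_affineCombination_of_mem_affineSpan_of_fintype hp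
  obtain ⟨q, hwq, hqH⟩ : ∃ q : s, w q ≠ 0 ∧ (q : P) ∉ H := by
    by_contra! h
    refine hpH (affineSpan_le.2 ?_ (affineCombination_mem_affineSpan_image hw
      (s' := {q | w q ≠ 0}) (fun q _ hq => not_not.1 hq) _))
    rintro _ ⟨q, hq, rfl⟩
    exact h q hq
  refine ⟨q, q.2, hqH, fun h => hwq ?_⟩
  rw [← s.image_val_setOf_ne q.2] at h
  exact hs.eq_zero_of_affineCombination_mem_affineSpan hw h (Finset.mem_univ q) (by simp)

theorem stmt_1_general (n : ℕ) (Δ Δ' : Finset (Fin n → ℚ))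
    (hcard' : Δ'.card = n + 1)
    (hai : AffineIndependent ℚ (fun p : {x // x ∈ Δ} => (p : Fin n → ℚ)))
    (hai' : AffineIndependent ℚ (fun p : {x // x ∈ Δ'} => (p : Fin n → ℚ)))
    (p₁ : Fin n → ℚ) (hp₁ : p₁ ∈ Δ) :
    ∃ q ∈ Δ',
      AffineIndependent ℚ
        (fun p : {x // x ∈ insert q (Δ.erase p₁)} => (p : Fin n → ℚ)) ∧
      AffineIndependent ℚ
        (fun p : {x // x ∈ insert p₁ (Δ'.erase q)} => (p : Fin n → ℚ)) := by
  classical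
  have hspan : affineSpan ℚ (Δ' : Set (Fin n → ℚ)) = ⊤ := by
    rw [← Subtype.range_coe (s := (Δ' : Set (Fin n → ℚ)))]
    exact hai'.affineSpan_eq_top_iff_card_eq_finrank_add_one.2 (by simp [hcard'])
  obtain ⟨q, hq, hqΔ, hp₁Δ'⟩ :=
    hai'.exists_exchange (hspan ▸ AffineSubspace.mem_top ℚ _ p₁) (hai.notMem_affineSpan_erase hp₁)
  refine ⟨q, hq, ?_, ?_⟩
  · exact (hai.mono (Finset.coe_subset.2 (Δ.erase_subset p₁))).finset_insert_of_notMem_affineSpan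
      hqΔ
  · exact (hai'.mono (Finset.coe_subset.2 (Δ'.erase_subset q))).finset_insert_of_notMem_affineSpan
      hp₁Δ'

/-- Exchange lemma: if `Δ` and `Δ'` are affinely independent subsets of `ℚ^n` of
cardinality `n+1` and `p₁ ∈ Δ`, `p₁ ∉ Δ'`, then there is `q ∈ Δ'` such that both
`(Δ \ {p₁}) ∪ {q}` and `(Δ' \ {q}) ∪ {p₁}` are affinely independent. -/
theorem stmt_1 (n : ℕ) (Δ Δ' : Finset (Fin n → ℚ))
    (hcard : Δ.card = n + 1) (hcard' : Δ'.card = n + 1)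
    (hai : AffineIndependent ℚ (fun p : {x // x ∈ Δ} => (p : Fin n → ℚ)))
    (hai' : AffineIndependent ℚ (fun p : {x // x ∈ Δ'} => (p : Fin n → ℚ)))
    (p₁ : Fin n → ℚ) (hp₁ : p₁ ∈ Δ) (hp₁' : p₁ ∉ Δ') :
    ∃ q ∈ Δ',
      AffineIndependent ℚ
        (fun p : {x // x ∈ insert q (Δ.erase p₁)} => (p : Fin n → ℚ)) ∧
      AffineIndependent ℚ
        (fun p : {x // x ∈ insert p₁ (Δ'.erase q)} => (p : Fin n → ℚ)) :=
  stmt_1_general n Δ Δ' hcard' hai hai' p₁ hp₁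
end

section
/- Let A be an n×n matrix over a commutative ring, let m < n, and fix a set of row indices J = {j_1 < … < j_m}. Then det(A) = ∑_{I = {i_1 < … < i_m} ⊆ [n]} (-1)^{i_1+…+i_m+j_1+…+j_m} · A_{J,I} · A_{J',I'}, where I' = [n] \ I, J' = [n] \ J, and A_{K,L} denotes the determinant of the submatrix of A with rows indexed by K and columns by L. -/
/-!
Expand `det A` over permutations `σ` and group them by `I = σ '' J`. Enumerating `J`, `Jᶜ`, `I`
and `Iᶜ` in increasing order, the permutations with `σ '' J = I` correspond to pairs `(g, h)` of
permutations of `Fin m` and `Fin (n - m)`, and `sign σ` is `sign g * sign h` times the sign of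
the shuffle `e_J⁻¹ ∘ e_I`, where `e_I` lists `I` before `Iᶜ`. That sign is `(-1) ^ (∑ I + ∑ J)`:
replacing `x + 1 ∈ I` by `x ∉ I` composes `e_I` with a transposition and lowers `∑ I` by one,
and once neither `I` nor `J` admits such a step, both are lower sets of the same size, so equal.
-/

open Finset Equiv

theorem Finset.orderEmbOfFin_image_of_strictMonoOn {α β : Type*} [LinearOrder α] [LinearOrder β]
    [DecidableEq β] {s : Finset α} {k : ℕ} (hs : #s = k) {f : α → β} (hf : StrictMonoOn f s)
    (hfs : #(s.image f) = k) (a : Fin k) :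
    (s.image f).orderEmbOfFin hfs a = f (s.orderEmbOfFin hs a) := by
  refine (congrFun (orderEmbOfFin_unique hfs (f := fun b => f (s.orderEmbOfFin hs b))
    (fun b => mem_image_of_mem f (orderEmbOfFin_mem s hs b)) fun a b hab => ?_) a).symm
  exact hf (orderEmbOfFin_mem s hs a) (orderEmbOfFin_mem s hs b)
    ((s.orderEmbOfFin hs).strictMono hab)

theorem Finset.eq_of_isLowerSet_of_card_eq {α : Type*} [LinearOrder α] {s t : Finset α}
    (hs : IsLowerSet (s : Set α)) (ht : IsLowerSet (t : Set α)) (hst : #s = #t) : s = t := by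
  rcases hs.total ht with h | h
  · exact eq_of_subset_of_card_le (coe_subset.1 h) hst.ge
  · exact (eq_of_subset_of_card_le (coe_subset.1 h) hst.le).symm

theorem finSumEquivOfFinset_mem_iff {α : Type*} [DecidableEq α] [Fintype α] [LinearOrder α]
    {m k : ℕ} {s : Finset α} (hm : #s = m) (hk : #sᶜ = k) (z : Fin m ⊕ Fin k) :
    finSumEquivOfFinset hm hk z ∈ s ↔ z.isLeft := by
  rcases z with a | b
  · simp [orderEmbOfFin_mem]
  · simpa using mem_compl.1 (orderEmbOfFin_mem sᶜ hk b)

theorem Equiv.Perm.sign_symm_trans_comm {α β : Type*} [DecidableEq β] [Fintype β]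
    (e f : α ≃ β) : Perm.sign (e.symm.trans f) = Perm.sign (f.symm.trans e) :=
  (Perm.sign_symm _).symm

section SortedShuffle

variable {n : ℕ}

theorem Fin.card_compl_eq_sub {m : ℕ} {s : Finset (Fin n)} (hs : #s = m) : #sᶜ = n - m := by
  rw [card_compl, Fintype.card_fin, hs]

theorem Fin.strictMonoOn_swap_of_val_eq_succ {x y : Fin n} (hxy : (y : ℕ) = x + 1)
    {s : Set (Fin n)} (hs : x ∉ s ∨ y ∉ s) : StrictMonoOn (swap x y) s := by
  intro u hu v hv huv
  by_cases hxy' : u = x ∧ v = y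
  · obtain ⟨rfl, rfl⟩ := hxy'
    tauto
  simp only [swap_apply_def]
  split_ifs <;> simp only [Fin.lt_def, Fin.ext_iff] at * <;> omega

theorem Finset.exists_val_eq_succ_of_not_isLowerSet {s : Finset (Fin n)}
    (hs : ¬ IsLowerSet (s : Set (Fin n))) : ∃ x y : Fin n, (y : ℕ) = x + 1 ∧ x ∉ s ∧ y ∈ s := by
  contrapose! hs
  intro a b hba ha
  rw [mem_coe] at ha ⊢
  by_contra hb
  have not_mem_above : ∀ d : ℕ, ∀ c : Fin n, (c : ℕ) = b + d → c ∉ s := by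
    intro d
    induction d with
    | zero => intro c hc; rwa [show c = b from Fin.ext hc]
    | succ d ih =>
      exact fun c hc => hs ⟨(b : ℕ) + d, by omega⟩ c (by simp [hc]; omega) (ih _ rfl)
  exact not_mem_above ((a : ℕ) - b) a (by rw [Fin.le_def] at hba; omega) ha

theorem finSumEquivOfFinset_image_swap {m k : ℕ} {s : Finset (Fin n)} {x y : Fin n}
    (hxy : (y : ℕ) = x + 1) (hx : x ∉ s) (hy : y ∈ s) (hs : #s = m) (hsc : #sᶜ = k)
    (ht : #(s.image (swap x y)) = m) (htc : #(s.image (swap x y))ᶜ = k) :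
    finSumEquivOfFinset ht htc = (finSumEquivOfFinset hs hsc).trans (swap x y) := by
  have hcompl : (s.image (swap x y))ᶜ = sᶜ.image (swap x y) := by
    ext z
    simp [swap_apply_eq_iff]
  ext (a | b) : 1
  · exact orderEmbOfFin_image_of_strictMonoOn hs
      (Fin.strictMonoOn_swap_of_val_eq_succ hxy (.inl hx)) ht a
  · simp only [finSumEquivOfFinset_inr, trans_apply, hcompl]
    exact orderEmbOfFin_image_of_strictMonoOn hsc
      (Fin.strictMonoOn_swap_of_val_eq_succ hxy (.inr (by simpa using hy))) _ b

theorem sum_val_image_swap {s : Finset (Fin n)} {x y : Fin n} (hxy : (y : ℕ) = x + 1)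
    (hx : x ∉ s) (hy : y ∈ s) :
    ∑ i ∈ s.image (swap x y), (i : ℕ) + 1 = ∑ i ∈ s, (i : ℕ) := by
  have hterm : ∀ i ∈ s, ((swap x y i : Fin n) : ℕ) + (if i = y then 1 else 0) = i := by
    intro i hi
    have hix : i ≠ x := ne_of_mem_of_not_mem hi hx
    by_cases hiy : i = y
    · simp [hiy, hxy]
    · simp [swap_apply_of_ne_of_ne hix hiy, hiy]
  rw [sum_image (swap x y).injective.injOn, ← sum_congr rfl hterm, sum_add_distrib,
    sum_ite_eq' s y, if_pos hy]

theorem exists_sum_val_succ_eq_and_sign_neg_of_not_isLowerSet {m k : ℕ} {s : Finset (Fin n)}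
    (hs : #s = m) (hsc : #sᶜ = k) (hlow : ¬ IsLowerSet (s : Set (Fin n)))
    (e : Fin m ⊕ Fin k ≃ Fin n) :
    ∃ (s' : Finset (Fin n)) (hs' : #s' = m) (hsc' : #s'ᶜ = k),
      ∑ i ∈ s', (i : ℕ) + 1 = ∑ i ∈ s, (i : ℕ) ∧
      Perm.sign (e.symm.trans (finSumEquivOfFinset hs hsc)) =
        -Perm.sign (e.symm.trans (finSumEquivOfFinset hs' hsc')) := by
  obtain ⟨x, y, hxy, hx, hy⟩ := exists_val_eq_succ_of_not_isLowerSet hlow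
  have hne : x ≠ y := fun h => by simp [h] at hxy
  have hs' : #(s.image (swap x y)) = m := by
    rw [card_image_of_injective _ (swap x y).injective, hs]
  have hsc' : #(s.image (swap x y))ᶜ = k := by rw [card_compl, hs', ← hs, ← card_compl, hsc]
  refine ⟨_, hs', hsc', sum_val_image_swap hxy hx hy, ?_⟩
  rw [finSumEquivOfFinset_image_swap hxy hx hy hs hsc, ← trans_assoc, Perm.sign_trans,
    Perm.sign_swap hne, neg_one_mul, neg_neg]

theorem sign_finSumEquivOfFinset_symm_trans {m k : ℕ} (s t : Finset (Fin n)) (hs : #s = m)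
    (hsc : #sᶜ = k) (ht : #t = m) (htc : #tᶜ = k) :
    Perm.sign ((finSumEquivOfFinset ht htc).symm.trans (finSumEquivOfFinset hs hsc)) =
      (-1) ^ (∑ i ∈ s, (i : ℕ) + ∑ j ∈ t, (j : ℕ)) := by
  obtain ⟨N, hN⟩ : ∃ N, ∑ i ∈ s, (i : ℕ) + ∑ j ∈ t, (j : ℕ) = N := ⟨_, rfl⟩
  induction N using Nat.strong_induction_on generalizing s t with
  | _ N ih =>
  by_cases hslow : IsLowerSet (s : Set (Fin n))
  · by_cases htlow : IsLowerSet (t : Set (Fin n))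
    · obtain rfl : s = t := eq_of_isLowerSet_of_card_eq hslow htlow (hs.trans ht.symm)
      simp [← two_mul, pow_mul]
    · obtain ⟨t', ht', htc', hsum, hsign⟩ :=
        exists_sum_val_succ_eq_and_sign_neg_of_not_isLowerSet ht htc htlow
          (finSumEquivOfFinset hs hsc)
      rw [Perm.sign_symm_trans_comm, hsign, Perm.sign_symm_trans_comm,
        ih _ (by omega) s t' hs hsc ht' htc' rfl, ← hsum, ← add_assoc, pow_succ, mul_neg_one]
  · obtain ⟨s', hs', hsc', hsum, hsign⟩ :=
      exists_sum_val_succ_eq_and_sign_neg_of_not_isLowerSet hs hsc hslow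
        (finSumEquivOfFinset ht htc)
    rw [hsign, ih _ (by omega) s' t hs' hsc' ht htc rfl, ← hsum, add_right_comm, pow_succ,
      mul_neg_one]

end SortedShuffle

theorem Matrix.det_eq_sum_sign_mul_prod {R ι : Type*} [CommRing R] [Fintype ι] [DecidableEq ι]
    (M : Matrix ι ι R) : M.det = ∑ σ : Perm ι, ((Perm.sign σ : ℤ) : R) * ∏ i, M i (σ i) := by
  rw [← Matrix.det_transpose, Matrix.det_apply']
  rfl

theorem Matrix.sum_sign_mul_prod_equivCongr_sumCongr {R ι α β : Type*} [CommRing R] [Fintype ι]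
    [DecidableEq ι] [Fintype α] [DecidableEq α] [Fintype β] [DecidableEq β]
    (A : Matrix ι ι R) (e f : α ⊕ β ≃ ι) :
    ∑ g : Perm α, ∑ h : Perm β, ((Perm.sign (e.equivCongr f (sumCongr g h)) : ℤ) : R) *
        ∏ i, A i (e.equivCongr f (sumCongr g h) i) =
      ((Perm.sign (e.symm.trans f) : ℤ) : R) * (A.submatrix (e ∘ Sum.inl) (f ∘ Sum.inl)).det *
        (A.submatrix (e ∘ Sum.inr) (f ∘ Sum.inr)).det := by
  rw [mul_assoc, det_eq_sum_sign_mul_prod, det_eq_sum_sign_mul_prod, sum_mul_sum, mul_sum]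
  refine sum_congr rfl fun g _ => ?_
  rw [mul_sum]
  refine sum_congr rfl fun h _ => ?_
  rw [Perm.sign_equivCongr, Perm.sign_sumCongr, ← e.prod_comp, Fintype.prod_sum_type]
  simp only [equivCongr_apply_apply, symm_apply_apply, sumCongr_apply, Sum.map_inl, Sum.map_inr,
    submatrix_apply, Function.comp_apply]
  push_cast
  ring

section LaplacePerm

variable {n m : ℕ} {J : Finset (Fin n)}

/-- For `p = (I, g, h)`, the permutation sending the `a`-th element of `J` to the `g a`-th element
of `I`, and the `b`-th element of `Jᶜ` to the `h b`-th element of `Iᶜ`. -/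
def laplacePerm (hJ : #J = m)
    (p : {I : Finset (Fin n) // I ∈ powersetCard m univ} × Perm (Fin m) × Perm (Fin (n - m))) :
    Perm (Fin n) :=
  (finSumEquivOfFinset hJ (Fin.card_compl_eq_sub hJ)).equivCongr
    (finSumEquivOfFinset (mem_powersetCard.1 p.1.2).2
      (Fin.card_compl_eq_sub (mem_powersetCard.1 p.1.2).2)) (sumCongr p.2.1 p.2.2)

theorem laplacePerm_mem_iff (hJ : #J = m) (I : {I : Finset (Fin n) // I ∈ powersetCard m univ})
    (g : Perm (Fin m)) (h : Perm (Fin (n - m))) (x : Fin n) :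
    laplacePerm hJ (I, g, h) x ∈ (I : Finset (Fin n)) ↔ x ∈ J := by
  obtain ⟨z, rfl⟩ := (finSumEquivOfFinset hJ (Fin.card_compl_eq_sub hJ)).surjective x
  rw [laplacePerm, equivCongr_apply_apply, symm_apply_apply, finSumEquivOfFinset_mem_iff,
    finSumEquivOfFinset_mem_iff]
  rcases z with a | b <;> rfl

theorem laplacePerm_injective (hJ : #J = m) : Function.Injective (laplacePerm hJ) := by
  rintro ⟨I, g, h⟩ ⟨I', g', h'⟩ heq
  obtain rfl : I = I' := by
    refine Subtype.ext (ext fun y => ?_)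
    obtain ⟨x, rfl⟩ := (laplacePerm hJ ⟨I, g, h⟩).surjective y
    rw [laplacePerm_mem_iff, heq, laplacePerm_mem_iff]
  have hgh : sumCongr g h = sumCongr g' h' := (equivCongr _ _).injective heq
  obtain ⟨rfl, rfl⟩ :=
    Prod.ext_iff.1 (Perm.sumCongrHom_injective (a₁ := (g, h)) (a₂ := (g', h')) hgh)
  rfl

theorem laplacePerm_bijective (hJ : #J = m) : Function.Bijective (laplacePerm hJ) := by
  have hm : m ≤ n := hJ ▸ card_le_univ J |>.trans_eq (Fintype.card_fin n)
  rw [Fintype.bijective_iff_injective_and_card]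
  refine ⟨laplacePerm_injective hJ, ?_⟩
  simp only [Fintype.card_prod, Fintype.card_coe, Fintype.card_perm, card_powersetCard, card_univ,
    Fintype.card_fin, ← mul_assoc, Nat.choose_mul_factorial_mul_factorial hm]

end LaplacePerm

/-- Laplace's generalized expansion of the determinant along a fixed set `J` of `m` rows. -/
theorem stmt_4 {R : Type*} [CommRing R] (n m : ℕ)
    (A : Matrix (Fin n) (Fin n) R) (J : Finset (Fin n)) (hJ : J.card = m) :
    A.det = ∑ I ∈ (Finset.univ.powersetCard m (α := Fin n)).attach,
      (-1 : R) ^ (∑ i ∈ (I : Finset (Fin n)), (i : ℕ) + ∑ j ∈ J, (j : ℕ)) *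
        Matrix.det (Matrix.of fun a b : Fin m =>
          A (J.orderIsoOfFin hJ a)
            ((I : Finset (Fin n)).orderIsoOfFin (Finset.mem_powersetCard.mp I.2).2 b)) *
        Matrix.det (Matrix.of fun a b : Fin (n - m) =>
          A (Jᶜ.orderIsoOfFin (by simp [Finset.card_compl, hJ]) a)
            (((I : Finset (Fin n))ᶜ).orderIsoOfFin
              (by simp [Finset.card_compl, (Finset.mem_powersetCard.mp I.2).2]) b)) := by
  rw [A.det_eq_sum_sign_mul_prod, ← (laplacePerm_bijective hJ).sum_comp, Fintype.sum_prod_type,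
    attach_eq_univ]
  refine sum_congr rfl fun I _ => ?_
  have hI : #(I : Finset (Fin n)) = m := (mem_powersetCard.1 I.2).2
  rw [Fintype.sum_prod_type]
  refine (A.sum_sign_mul_prod_equivCongr_sumCongr
    (finSumEquivOfFinset hJ (Fin.card_compl_eq_sub hJ))
    (finSumEquivOfFinset hI (Fin.card_compl_eq_sub hI))).trans ?_
  rw [sign_finSumEquivOfFinset_symm_trans]
  push_cast
  rfl
end

section
/- Let P ⊂ ℝ^n be a full-dimensional lattice polytope, Δ ⊆ P a lattice simplex separated by an affine hyperplane from the convex hull P_0 of the lattice points of P \ Δ. Then for every regular subdivision S(P_0, w_0) of P_0 induced by a weight function w_0 on the lattice points of P_0, there exists a weight function w on the lattice points of P extending w_0 such that the induced regular subdivision S(P, w) contains all polytopes of S(P_0, w_0) and contains Δ as a cell. -/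
/-!
Extend `w₀` to `Δ` by `M · S`, where `S` is the affine function separating `Δ` (where `S > 0`)
from the other points (where `S < 0`). For `M` large, `M · S` lies above every affine function
supporting a cell of `S(L \ Δ, w₀)` at the points of `Δ`, so those cells survive; and `M · S`
is itself an affine function equal to `w` on `Δ` and below `w₀` elsewhere, so `Δ` is a cell.
-/

open Filter

def castR {n : ℕ} (p : Fin n → ℤ) : Fin n → ℝ := fun i => (p i : ℝ)

/-- `F` is a cell of the regular subdivision of the point configuration `A ⊆ ℤ^n`
induced by the weight function `w`: there is an affine function agreeing with `w`
on `F` and strictly below `w` on the remaining points of `A` (a lower face of the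
lifted polytope projects onto `conv F`). -/
def IsCell {n : ℕ} (A : Finset (Fin n → ℤ)) (w : (Fin n → ℤ) → ℝ)
    (F : Finset (Fin n → ℤ)) : Prop :=
  F ⊆ A ∧ ∃ (g : Fin n → ℝ) (c : ℝ),
    (∀ p ∈ F, w p = ∑ i, g i * (p i : ℝ) + c) ∧
    (∀ p ∈ A, p ∉ F → ∑ i, g i * (p i : ℝ) + c < w p)

namespace RegularSubdivision

variable {n : ℕ}

def affineEval (g : Fin n → ℝ) (c : ℝ) (p : Fin n → ℤ) : ℝ := ∑ i, g i * (p i : ℝ) + c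

theorem mul_affineEval (M : ℝ) (g : Fin n → ℝ) (c : ℝ) (p : Fin n → ℤ) :
    M * affineEval g c p = affineEval (M • g) (M * c) p := by
  simp only [affineEval, mul_add, Finset.mul_sum, Pi.smul_apply, smul_eq_mul, mul_assoc]

def extendWeight (Δ : Finset (Fin n → ℤ)) (w₀ : (Fin n → ℤ) → ℝ) (s : Fin n → ℝ) (d : ℝ)
    (M : ℝ) (p : Fin n → ℤ) : ℝ :=
  if p ∈ Δ then M * affineEval s d p else w₀ p

variable {L Δ : Finset (Fin n → ℤ)} {w₀ : (Fin n → ℤ) → ℝ} {s : Fin n → ℝ} {d : ℝ}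

theorem eventually_isCell_extendWeight_of_isCell (hpos : ∀ p ∈ Δ, 0 < affineEval s d p)
    {F : Finset (Fin n → ℤ)} (hF : IsCell (L \ Δ) w₀ F) :
    ∀ᶠ M in atTop, IsCell L (extendWeight Δ w₀ s d M) F := by
  obtain ⟨hFsub, g, c, hgF, hglt⟩ := hF
  have hlarge : ∀ᶠ M in atTop, ∀ p ∈ Δ, affineEval g c p < M * affineEval s d p :=
    (eventually_all_finset Δ).2 fun p hp =>
      (tendsto_id.atTop_mul_const (hpos p hp)).eventually_gt_atTop _
  filter_upwards [hlarge] with M hM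
  refine ⟨hFsub.trans Finset.sdiff_subset, g, c, fun p hp => ?_, fun p hpL hpF => ?_⟩
  · have hpΔ : p ∉ Δ := (Finset.mem_sdiff.1 (hFsub hp)).2
    simpa [extendWeight, hpΔ] using hgF p hp
  · by_cases hpΔ : p ∈ Δ
    · simpa [extendWeight, hpΔ, affineEval] using hM p hpΔ
    · simpa [extendWeight, hpΔ] using hglt p (Finset.mem_sdiff.2 ⟨hpL, hpΔ⟩) hpF

theorem eventually_isCell_extendWeight_self (hΔL : Δ ⊆ L)
    (hneg : ∀ p ∈ L, p ∉ Δ → affineEval s d p < 0) :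
    ∀ᶠ M in atTop, IsCell L (extendWeight Δ w₀ s d M) Δ := by
  have hlarge : ∀ᶠ M in atTop, ∀ p ∈ L \ Δ, M * affineEval s d p < w₀ p :=
    (eventually_all_finset _).2 fun p hp =>
      (tendsto_id.atTop_mul_const_of_neg
        (hneg p (Finset.mem_sdiff.1 hp).1 (Finset.mem_sdiff.1 hp).2)).eventually_lt_atBot _
  filter_upwards [hlarge] with M hM
  refine ⟨hΔL, M • s, M * d, fun p hp => ?_, fun p hpL hpΔ => ?_⟩
  · rw [extendWeight, if_pos hp]
    exact mul_affineEval M s d p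
  · rw [extendWeight, if_neg hpΔ]
    exact (mul_affineEval M s d p).symm.trans_lt (hM p (Finset.mem_sdiff.2 ⟨hpL, hpΔ⟩))

end RegularSubdivision

open RegularSubdivision in
theorem stmt_11_general (n : ℕ) (L Δ : Finset (Fin n → ℤ))
    (hΔL : Δ ⊆ L)
    (hsep : ∃ (g : Fin n → ℝ) (c : ℝ),
      (∀ p ∈ Δ, 0 < ∑ i, g i * (p i : ℝ) + c) ∧
      (∀ p ∈ L, p ∉ Δ → ∑ i, g i * (p i : ℝ) + c < 0))
    (w₀ : (Fin n → ℤ) → ℝ) :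
    ∃ w : (Fin n → ℤ) → ℝ,
      (∀ p ∈ L, p ∉ Δ → w p = w₀ p) ∧
      (∀ F : Finset (Fin n → ℤ), IsCell (L \ Δ) w₀ F → IsCell L w F) ∧
      IsCell L w Δ := by
  obtain ⟨s, d, hpos, hneg⟩ := hsep
  have hcells : ∀ᶠ M in atTop, ∀ F ∈ (L \ Δ).powerset,
      IsCell (L \ Δ) w₀ F → IsCell L (extendWeight Δ w₀ s d M) F :=
    (eventually_all_finset _).2 fun _ _ =>
      eventually_imp_distrib_left.2 (eventually_isCell_extendWeight_of_isCell hpos)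
  obtain ⟨M, hM, hΔ⟩ :=
    (hcells.and (eventually_isCell_extendWeight_self (w₀ := w₀) hΔL hneg)).exists
  refine ⟨extendWeight Δ w₀ s d M, fun p _ hp => if_neg hp, fun F hF => ?_, hΔ⟩
  exact hM F (Finset.mem_powerset.2 hF.1) hF

/-- Let `L` be the lattice points of a lattice polytope `P`, and `Δ ⊆ L` a lattice
simplex separated by an affine hyperplane from the convex hull of `L \ Δ`. Then every
regular subdivision of `L \ Δ` induced by a weight `w₀` extends to a regular
subdivision of `L` induced by a weight `w` which contains all cells of the former and
contains `Δ` as a cell. -/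
theorem stmt_11 (n : ℕ) (L Δ : Finset (Fin n → ℤ))
    (hΔL : Δ ⊆ L) (hcard : Δ.card = n + 1)
    (hai : AffineIndependent ℝ (fun p : {x // x ∈ Δ} => castR (p : Fin n → ℤ)))
    (hsep : ∃ (g : Fin n → ℝ) (c : ℝ),
      (∀ p ∈ Δ, 0 < ∑ i, g i * (p i : ℝ) + c) ∧
      (∀ p ∈ L, p ∉ Δ → ∑ i, g i * (p i : ℝ) + c < 0))
    (w₀ : (Fin n → ℤ) → ℝ) :
    ∃ w : (Fin n → ℤ) → ℝ,
      (∀ p ∈ L, p ∉ Δ → w p = w₀ p) ∧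
      (∀ F : Finset (Fin n → ℤ), IsCell (L \ Δ) w₀ F → IsCell L w F) ∧
      IsCell L w Δ :=
  stmt_11_general n L Δ hΔL hsep w₀
end

section
/- The lattice points of the polytope Δ^1_1 × 2·Δ^n (the product of the unit segment and the second dilate of the standard n-simplex) can be partitioned into n+1 pairwise disjoint affinely independent subsets of cardinality n+2 each, namely the sets S_1,…,S_{n+1} given by: S_i = {e_1+e_{i+1}} ∪ {e_1+e_{i+1}+e_j : j = i+1,…,n+1} ∪ {e_{i+1}+e_j : j = 2,…,i+1} for 1 ≤ i ≤ n, and S_{n+1} = {0} ∪ {e_j : j = 1,…,n+1}, where e_1 is the coordinate of the segment factor and e_2,…,e_{n+1} the coordinates of the simplex factor. -/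
open Finset

/-- `dl n k` is the indicator vector of coordinate `k` in `ℤ^{n+1}`.
Coordinate `0` corresponds to the segment factor (`e₁` in the paper) and
coordinates `1, …, n` to the simplex factor (`e₂, …, e_{n+1}` in the paper). -/
def dl (n k : ℕ) : Fin (n + 1) → ℤ := fun l => if (l : ℕ) = k then 1 else 0

/-- The sets `S_1, …, S_{n+1}` (indexed by `i = 1, …, n+1`). -/
def Spart (n i : ℕ) : Set (Fin (n + 1) → ℤ) :=
  if i ≤ n then
    {dl n 0 + dl n i} ∪
      {x | ∃ j, i ≤ j ∧ j ≤ n ∧ x = dl n 0 + dl n i + dl n j} ∪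
      {x | ∃ j, 1 ≤ j ∧ j ≤ i ∧ x = dl n i + dl n j}
  else {0} ∪ {x | ∃ k ≤ n, x = dl n k}

/-- The lattice points of `Δ¹ × 2·Δⁿ`. -/
def LatticePts (n : ℕ) : Set (Fin (n + 1) → ℤ) :=
  {x | (∀ l, 0 ≤ x l) ∧ x 0 ≤ 1 ∧ ∑ l ∈ Finset.univ.erase 0, x l ≤ 2}

/-!
Write `e a = Pi.single a 1`. For `0 < a ≤ n` the set `S_a` consists of `e a + e j` (`j ≤ a`) and
`e 0 + e a + e j` (`a ≤ j`), so it has at most `n + 2` points. Its differences contain `e j`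
for `j ≥ a` and `e j - e 0` for `j ≤ a`, hence also `e 0 = e a - (e a - e 0)` and every `e j`;
so `S_a` affinely spans `ℚ^{n+1}`, and a spanning family of at most `n + 2` points of
`ℚ^{n+1}` is affinely independent with exactly `n + 2` points. The same holds for
`S_{n+1} = {0, e 0, …, e n}`.

The sets are disjoint because a point `x ∈ S_a` determines `a`: among the indices `m ≠ 0` with
`x m ≠ 0`, it is the largest if `x 0 = 0` and the smallest if `x 0 ≠ 0`; points of `S_{n+1}`
have coordinate sum at most `1`, those of `S_a` at least `2`. They cover the polytope since a
lattice point is `c • e 0 + r` with `c ∈ {0, 1}` and `r` a sum of at most two `e a` with `a ≠ 0`.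
-/

section

variable {k V P ι : Type*} [DivisionRing k] [AddCommGroup V] [Module k V] [AddTorsor V P]

theorem affineIndependent_and_card_of_affineSpan_eq_top [Finite ι] {p : ι → P}
    (hp : affineSpan k (Set.range p) = ⊤) (hcard : Nat.card ι ≤ Module.finrank k V + 1) :
    AffineIndependent k p ∧ Nat.card ι = Module.finrank k V + 1 := by
  have := Fintype.ofFinite ι
  rw [Nat.card_eq_fintype_card] at hcard ⊢
  have hpos := AffineSubspace.card_pos_of_affineSpan_eq_top k V P hp
  have hspan : Module.finrank k (vectorSpan k (Set.range p)) = Module.finrank k V := by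
    rw [AffineSubspace.vectorSpan_eq_top_of_affineSpan_eq_top k V P hp, finrank_top]
  have hc : Fintype.card ι = (Fintype.card ι - 1) + 1 := by omega
  have hle := finrank_vectorSpan_range_le k p hc
  exact ⟨(affineIndependent_iff_le_finrank_vectorSpan k p hc).2 (by omega), by omega⟩

end

theorem vectorSpan_eq_top_of_single_mem {K ι : Type*} [Field K] [Finite ι] [DecidableEq ι]
    {s : Set (ι → K)} (h : ∀ l, Pi.single l 1 ∈ vectorSpan K s) : vectorSpan K s = ⊤ := by
  rw [eq_top_iff, ← (Pi.basisFun K ι).span_eq, Submodule.span_le]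
  rintro _ ⟨l, rfl⟩
  simpa using h l


section

variable {ι : Type*} [Fintype ι] [DecidableEq ι] {f : ι → ℤ}

theorem exists_sub_single_nonneg (hf : 0 ≤ f) (hs : 0 < ∑ i, f i) :
    ∃ a, 0 ≤ f - Pi.single a 1 ∧ ∑ i, (f - Pi.single a 1 : ι → ℤ) i = ∑ i, f i - 1 := by
  obtain ⟨a, -, ha⟩ := Finset.exists_lt_of_sum_lt (s := Finset.univ) (f := 0) (g := f)
    (by simpa using hs)
  rw [Pi.zero_apply] at ha
  refine ⟨a, sub_nonneg.2 fun i => ?_, by simp [Finset.sum_sub_distrib]⟩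
  rcases eq_or_ne i a with rfl | h
  · rw [Pi.single_eq_same]
    exact ha
  · rw [Pi.single_eq_of_ne h]
    exact hf i

theorem eq_zero_or_single_or_single_add_single (hf : 0 ≤ f) (hs : ∑ i, f i ≤ 2) :
    f = 0 ∨ (∃ a, f = Pi.single a 1) ∨ ∃ a b, f = Pi.single a 1 + Pi.single b 1 := by
  rcases le_or_gt (∑ i, f i) 0 with h0 | h0
  · exact .inl ((Fintype.sum_eq_zero_iff_of_nonneg hf).1 (le_antisymm h0 (Fintype.sum_nonneg hf)))
  obtain ⟨a, hg, hgs⟩ := exists_sub_single_nonneg hf h0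
  rcases le_or_gt (∑ i, (f - Pi.single a 1 : ι → ℤ) i) 0 with h1 | h1
  · have := (Fintype.sum_eq_zero_iff_of_nonneg hg).1 (le_antisymm h1 (Fintype.sum_nonneg hg))
    exact .inr (.inl ⟨a, sub_eq_zero.1 this⟩)
  obtain ⟨b, hh, hhs⟩ := exists_sub_single_nonneg hg h1
  have := (Fintype.sum_eq_zero_iff_of_nonneg hh).1 (le_antisymm (by omega) (Fintype.sum_nonneg hh))
  refine .inr (.inr ⟨a, b, ?_⟩)
  rw [sub_sub, sub_eq_zero] at this
  exact this

end

section

variable {n : ℕ}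

theorem dl_eq_single {k : ℕ} (hk : k < n + 1) : dl n k = Pi.single ⟨k, hk⟩ 1 := by
  funext l
  simp [dl, Pi.single_apply, Fin.ext_iff]

theorem dl_val (a : Fin (n + 1)) : dl n a = Pi.single a 1 :=
  dl_eq_single a.is_lt

theorem mem_Spart {i : Fin (n + 1)} {x : Fin (n + 1) → ℤ} :
    x ∈ Spart n i ↔ (∃ j ≤ i, x = Pi.single i 1 + Pi.single j 1) ∨
      ∃ j, i ≤ j ∧ x = Pi.single 0 1 + Pi.single i 1 + Pi.single j 1 := by
  rw [Spart, if_pos (Nat.le_of_lt_succ i.is_lt), show dl n 0 = Pi.single 0 1 from dl_val 0, dl_val]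
  simp only [Set.mem_union, Set.mem_singleton_iff, Set.mem_ofPred_eq]
  constructor
  · rintro ((h | ⟨j, hij, hj, h⟩) | ⟨j, hj, hji, h⟩)
    · exact .inl ⟨0, Fin.zero_le i, h.trans (add_comm _ _)⟩
    · exact .inr ⟨⟨j, by omega⟩, Fin.le_def.2 hij, by rw [h, dl_eq_single]⟩
    · exact .inl ⟨⟨j, by omega⟩, Fin.le_def.2 hji, by rw [h, dl_eq_single]⟩
  · rintro (⟨j, hji, h⟩ | ⟨j, hij, h⟩)
    · rcases eq_or_ne j 0 with rfl | hj
      · exact .inl (.inl (h.trans (add_comm _ _)))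
      · exact .inr ⟨j, Nat.one_le_iff_ne_zero.2 (Fin.val_ne_zero_iff.2 hj), hji, by rw [h, dl_val]⟩
    · exact .inl (.inr ⟨j, hij, Nat.le_of_lt_succ j.is_lt, by rw [h, dl_val]⟩)

theorem mem_Spart_last {x : Fin (n + 1) → ℤ} :
    x ∈ Spart n (n + 1) ↔ x = 0 ∨ ∃ a, x = Pi.single a 1 := by
  rw [Spart, if_neg (by omega)]
  simp only [Set.mem_union, Set.mem_singleton_iff, Set.mem_ofPred_eq]
  refine or_congr Iff.rfl ⟨fun ⟨k, hk, h⟩ => ⟨_, h.trans (dl_eq_single (by omega))⟩, ?_⟩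
  rintro ⟨a, h⟩
  exact ⟨a, Nat.le_of_lt_succ a.is_lt, by rw [h, dl_val]⟩

theorem eq_add_one_or_exists_fin {i : ℕ} (h1 : 1 ≤ i) (h2 : i ≤ n + 1) :
    i = n + 1 ∨ ∃ a : Fin (n + 1), a ≠ 0 ∧ (a : ℕ) = i := by
  rcases h2.eq_or_lt with h | h
  · exact .inl h
  · refine .inr ⟨⟨i, h⟩, ?_, rfl⟩
    rw [Ne, Fin.ext_iff, Fin.val_zero]
    exact Nat.one_le_iff_ne_zero.1 h1

theorem Spart_subset_image (i : Fin (n + 1)) :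
    Spart n i ⊆ ↑((Iic i).image (fun j => (Pi.single i 1 + Pi.single j 1 : _ → ℤ)) ∪
      (Ici i).image (fun j => (Pi.single 0 1 + Pi.single i 1 + Pi.single j 1 : _ → ℤ))) := by
  intro x hx
  simp only [coe_union, coe_image, coe_Iic, coe_Ici, Set.mem_union, Set.mem_image, Set.mem_Iic,
    Set.mem_Ici]
  rcases mem_Spart.1 hx with ⟨j, hj, rfl⟩ | ⟨j, hj, rfl⟩
  exacts [.inl ⟨j, hj, rfl⟩, .inr ⟨j, hj, rfl⟩]

theorem Spart_last_subset_image :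
    Spart n (n + 1) ⊆ ↑(insert 0 (univ.image fun a : Fin (n + 1) => (Pi.single a 1 : _ → ℤ))) := by
  intro x hx
  simp only [coe_insert, coe_image, coe_univ, Set.image_univ, Set.mem_insert_iff, Set.mem_range]
  rcases mem_Spart_last.1 hx with rfl | ⟨a, rfl⟩
  exacts [.inl rfl, .inr ⟨a, rfl⟩]

theorem exists_finset_card_le_superset_Spart {i : ℕ} (h1 : 1 ≤ i) (h2 : i ≤ n + 1) :
    ∃ t : Finset (Fin (n + 1) → ℤ), Spart n i ⊆ t ∧ #t ≤ n + 2 := by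
  obtain rfl | ⟨a, -, rfl⟩ := eq_add_one_or_exists_fin h1 h2
  · refine ⟨_, Spart_last_subset_image, (card_insert_le _ _).trans ?_⟩
    simpa using card_image_le (s := univ) (f := fun a : Fin (n + 1) => (Pi.single a 1 : _ → ℤ))
  · refine ⟨_, Spart_subset_image a, (card_union_le _ _).trans ?_⟩
    refine (add_le_add card_image_le card_image_le).trans ?_
    simp only [Fin.card_Iic, Fin.card_Ici]
    omega

theorem finite_Spart {i : ℕ} (h1 : 1 ≤ i) (h2 : i ≤ n + 1) : (Spart n i).Finite :=
  let ⟨t, ht, _⟩ := exists_finset_card_le_superset_Spart h1 h2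
  t.finite_toSet.subset ht

theorem ncard_Spart_le {i : ℕ} (h1 : 1 ≤ i) (h2 : i ≤ n + 1) : (Spart n i).ncard ≤ n + 2 :=
  let ⟨t, ht, hcard⟩ := exists_finset_card_le_superset_Spart h1 h2
  (Set.ncard_le_ncard ht t.finite_toSet).trans (by rwa [Set.ncard_coe_finset])

theorem Spart_subset_LatticePts {i : ℕ} (h1 : 1 ≤ i) (h2 : i ≤ n + 1) :
    Spart n i ⊆ LatticePts n := by
  have single_nonneg (a : Fin (n + 1)) : (0 : Fin (n + 1) → ℤ) ≤ Pi.single a 1 :=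
    Pi.single_nonneg.2 zero_le_one
  intro x hx
  obtain rfl | ⟨a, ha, rfl⟩ := eq_add_one_or_exists_fin h1 h2
  · rcases mem_Spart_last.1 hx with rfl | ⟨b, rfl⟩
    · simp [LatticePts]
    · exact ⟨single_nonneg b, by rw [Pi.single_apply]; split_ifs <;> norm_num,
        by rw [sum_pi_single']; split_ifs <;> norm_num⟩
  · rcases mem_Spart.1 hx with ⟨j, hj, rfl⟩ | ⟨j, hj, rfl⟩
    · refine ⟨add_nonneg (single_nonneg a) (single_nonneg j), ?_, ?_⟩
      · rw [Pi.add_apply, Pi.single_eq_of_ne' ha, zero_add, Pi.single_apply]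
        split_ifs <;> norm_num
      · simp only [Pi.add_apply, sum_add_distrib, sum_pi_single']
        split_ifs <;> norm_num
    · have hj0 : j ≠ 0 := fun h => ha (Fin.le_zero_iff.1 (h ▸ hj))
      exact ⟨add_nonneg (add_nonneg (single_nonneg 0) (single_nonneg a)) (single_nonneg j),
        by simp [ha, hj0], by simp [sum_add_distrib, ha, hj0]⟩

theorem two_le_sum_of_mem_Spart {a : Fin (n + 1)} {x : Fin (n + 1) → ℤ} (hx : x ∈ Spart n a) :
    2 ≤ ∑ l, x l := by
  rcases mem_Spart.1 hx with ⟨j, -, rfl⟩ | ⟨j, -, rfl⟩ <;> simp [sum_add_distrib]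

theorem sum_le_one_of_mem_Spart_last {x : Fin (n + 1) → ℤ} (hx : x ∈ Spart n (n + 1)) :
    ∑ l, x l ≤ 1 := by
  rcases mem_Spart_last.1 hx with rfl | ⟨a, rfl⟩ <;> simp

theorem index_bounds_of_mem_Spart {a : Fin (n + 1)} (ha : a ≠ 0) {x : Fin (n + 1) → ℤ}
    (hx : x ∈ Spart n a) : x a ≠ 0 ∧
      ∀ m ≠ 0, x m ≠ 0 → (x 0 = 0 → m ≤ a) ∧ (x 0 ≠ 0 → a ≤ m) := by
  rcases mem_Spart.1 hx with ⟨j, hj, rfl⟩ | ⟨j, hj, rfl⟩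
  · refine ⟨?_, fun m hm hxm => ?_⟩
    · rw [Pi.add_apply, Pi.single_eq_same, Pi.single_apply]
      split_ifs <;> norm_num
    have hm' : m = a ∨ m = j := by
      by_contra! h
      simp [h.1, h.2] at hxm
    refine ⟨fun _ => hm'.elim le_of_eq fun h => h ▸ hj, fun hx0 => ?_⟩
    have hj0 : j = 0 := by
      by_contra hj0
      simp [ha.symm, Ne.symm hj0] at hx0
    exact hm'.elim ge_of_eq fun h => absurd (h.trans hj0) hm
  · have hj0 : j ≠ 0 := fun h => ha (Fin.le_zero_iff.1 (h ▸ hj))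
    refine ⟨?_, fun m hm hxm => ?_⟩
    · rw [Pi.add_apply, Pi.add_apply, Pi.single_eq_of_ne ha, Pi.single_eq_same, Pi.single_apply]
      split_ifs <;> norm_num
    have hm' : m = a ∨ m = j := by
      by_contra! h
      simp [hm, h.1, h.2] at hxm
    refine ⟨fun hx0 => by simp [ha.symm, hj0.symm] at hx0, fun _ => ?_⟩
    exact hm'.elim ge_of_eq fun h => h ▸ hj

theorem eq_of_mem_Spart_of_mem_Spart {a b : Fin (n + 1)} (ha : a ≠ 0) (hb : b ≠ 0)
    {x : Fin (n + 1) → ℤ} (hxa : x ∈ Spart n a) (hxb : x ∈ Spart n b) : a = b := by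
  obtain ⟨hxa', hspec_a⟩ := index_bounds_of_mem_Spart ha hxa
  obtain ⟨hxb', hspec_b⟩ := index_bounds_of_mem_Spart hb hxb
  have hba := hspec_a b hb hxb'
  have hab := hspec_b a ha hxa'
  by_cases h0 : x 0 = 0
  · exact le_antisymm (hab.1 h0) (hba.1 h0)
  · exact le_antisymm (hba.2 h0) (hab.2 h0)

theorem disjoint_Spart {i j : ℕ} (hi1 : 1 ≤ i) (hi2 : i ≤ n + 1) (hj1 : 1 ≤ j) (hj2 : j ≤ n + 1)
    (hij : i ≠ j) : Disjoint (Spart n i) (Spart n j) := by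
  rw [Set.disjoint_left]
  intro x hxi hxj
  obtain rfl | ⟨a, ha, rfl⟩ := eq_add_one_or_exists_fin hi1 hi2 <;>
    obtain rfl | ⟨b, hb, rfl⟩ := eq_add_one_or_exists_fin hj1 hj2
  · exact hij rfl
  · linarith [sum_le_one_of_mem_Spart_last hxi, two_le_sum_of_mem_Spart hxj]
  · linarith [sum_le_one_of_mem_Spart_last hxj, two_le_sum_of_mem_Spart hxi]
  · exact hij (congrArg Fin.val (eq_of_mem_Spart_of_mem_Spart ha hb hxi hxj))

theorem exists_eq_single_zero_add_of_mem_LatticePts {x : Fin (n + 1) → ℤ} (hx : x ∈ LatticePts n) :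
    ∃ c r, (c = 0 ∨ c = 1) ∧ r 0 = 0 ∧ 0 ≤ r ∧ ∑ l, r l ≤ 2 ∧ x = Pi.single 0 c + r := by
  obtain ⟨hnonneg, hx0, hsum⟩ := hx
  refine ⟨x 0, x - Pi.single 0 (x 0), by have := hnonneg 0; omega, by simp, fun l => ?_, ?_,
    (add_sub_cancel _ _).symm⟩
  · rcases eq_or_ne l 0 with rfl | hl
    · simp
    · simpa [hl] using hnonneg l
  · rw [← add_sum_erase _ _ (mem_univ 0), Pi.sub_apply, Pi.single_eq_same, sub_self, zero_add]
    refine le_of_eq_of_le (sum_congr rfl fun l hl => ?_) hsum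
    simp [(mem_erase.1 hl).1]

theorem exists_mem_Spart {x : Fin (n + 1) → ℤ} (hx : x ∈ LatticePts n) :
    ∃ i ∈ Set.Icc 1 (n + 1), x ∈ Spart n i := by
  have mem_Icc {a : Fin (n + 1)} (ha : a ≠ 0) : (a : ℕ) ∈ Set.Icc 1 (n + 1) :=
    ⟨Nat.one_le_iff_ne_zero.2 (Fin.val_ne_zero_iff.2 ha), a.is_lt.le⟩
  obtain ⟨c, r, hc, hr0, hr_nonneg, hr_sum, rfl⟩ := exists_eq_single_zero_add_of_mem_LatticePts hx
  rcases eq_zero_or_single_or_single_add_single hr_nonneg hr_sum with rfl | ⟨a, rfl⟩ | ⟨a, b, rfl⟩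
  · refine ⟨n + 1, by simp, mem_Spart_last.2 ?_⟩
    rcases hc with rfl | rfl
    exacts [.inl (by simp), .inr ⟨0, by simp⟩]
  · have ha : a ≠ 0 := by rintro rfl; simp at hr0
    rcases hc with rfl | rfl
    · exact ⟨n + 1, by simp, mem_Spart_last.2 (.inr ⟨a, by simp⟩)⟩
    · exact ⟨a, mem_Icc ha, mem_Spart.2 (.inl ⟨0, Fin.zero_le a, add_comm _ _⟩)⟩
  · have ha : a ≠ 0 := by
      rintro rfl
      rw [Pi.add_apply, Pi.single_apply, Pi.single_apply] at hr0
      split_ifs at hr0 <;> omega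
    have hb : b ≠ 0 := by
      rintro rfl
      rw [Pi.add_apply, Pi.single_apply, Pi.single_apply] at hr0
      split_ifs at hr0 <;> omega
    obtain ⟨a, b, hab, ha, hb, hsum⟩ : ∃ a' b', a' ≤ b' ∧ a' ≠ 0 ∧ b' ≠ 0 ∧
        Pi.single a 1 + Pi.single b 1 = (Pi.single a' 1 + Pi.single b' 1 : _ → ℤ) :=
      (le_total a b).elim (fun h => ⟨a, b, h, ha, hb, rfl⟩) fun h => ⟨b, a, h, hb, ha, add_comm _ _⟩
    rw [hsum]
    rcases hc with rfl | rfl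
    · exact ⟨b, mem_Icc hb, mem_Spart.2 (.inl ⟨a, hab, by simp [add_comm]⟩)⟩
    · exact ⟨a, mem_Icc ha, mem_Spart.2 (.inr ⟨b, hab, (add_assoc _ _ _).symm⟩)⟩

theorem affineSpan_image_Spart {i : ℕ} (h1 : 1 ≤ i) (h2 : i ≤ n + 1) :
    affineSpan ℚ ((Int.castAddHom ℚ).compLeft (Fin (n + 1)) '' Spart n i) = ⊤ := by
  set φ := (Int.castAddHom ℚ).compLeft (Fin (n + 1))
  set M := vectorSpan ℚ (φ '' Spart n i)
  have hφ (a : Fin (n + 1)) : φ (Pi.single a 1) = Pi.single a 1 := by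
    ext l
    simp [φ, Pi.single_apply]
  have hsub {x y} (hx : x ∈ Spart n i) (hy : y ∈ Spart n i) : φ x - φ y ∈ M :=
    vsub_mem_vectorSpan ℚ (Set.mem_image_of_mem φ hx) (Set.mem_image_of_mem φ hy)
  obtain rfl | ⟨a, -, rfl⟩ := eq_add_one_or_exists_fin h1 h2
  · have h0 : (0 : Fin (n + 1) → ℤ) ∈ Spart n (n + 1) := mem_Spart_last.2 (.inl rfl)
    rw [AffineSubspace.affineSpan_eq_top_iff_vectorSpan_eq_top_of_nonempty ℚ _ _
      ⟨_, Set.mem_image_of_mem φ h0⟩]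
    refine vectorSpan_eq_top_of_single_mem fun l => ?_
    simpa [hφ] using hsub (mem_Spart_last.2 (.inr ⟨l, rfl⟩)) h0
  · have hbase : Pi.single a 1 + Pi.single 0 1 ∈ Spart n a :=
      mem_Spart.2 (.inl ⟨0, Fin.zero_le a, rfl⟩)
    have hup (j) (hj : a ≤ j) : Pi.single j 1 ∈ M := by
      simpa [hφ, add_comm] using hsub (mem_Spart.2 (.inr ⟨j, hj, rfl⟩)) hbase
    have hdown (j) (hj : j ≤ a) : Pi.single j 1 - Pi.single 0 1 ∈ M := by
      simpa [hφ] using hsub (mem_Spart.2 (.inl ⟨j, hj, rfl⟩)) hbase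
    have h0 : Pi.single 0 1 ∈ M := by simpa using M.sub_mem (hup a le_rfl) (hdown a le_rfl)
    rw [AffineSubspace.affineSpan_eq_top_iff_vectorSpan_eq_top_of_nonempty ℚ _ _
      ⟨_, Set.mem_image_of_mem φ hbase⟩]
    refine vectorSpan_eq_top_of_single_mem fun l => ?_
    rcases le_total a l with h | h
    · exact hup l h
    · simpa using M.add_mem (hdown l h) h0

end

theorem stmt_14_general (n : ℕ) :
    (∀ i j, 1 ≤ i → i ≤ n + 1 → 1 ≤ j → j ≤ n + 1 → i ≠ j →
      Disjoint (Spart n i) (Spart n j)) ∧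
    (⋃ i ∈ Set.Icc 1 (n + 1), Spart n i) = LatticePts n ∧
    (∀ i, 1 ≤ i → i ≤ n + 1 → (Spart n i).ncard = n + 2) ∧
    (∀ i, 1 ≤ i → i ≤ n + 1 →
      AffineIndependent ℚ
        (fun p : Spart n i => fun l => ((p : Fin (n + 1) → ℤ) l : ℚ))) := by
  have key (i : ℕ) (h1 : 1 ≤ i) (h2 : i ≤ n + 1) :=
    have := (finite_Spart h1 h2).to_subtype
    affineIndependent_and_card_of_affineSpan_eq_top (k := ℚ)
      (p := fun p : Spart n i => fun l => ((p : Fin (n + 1) → ℤ) l : ℚ))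
      (by
        convert affineSpan_image_Spart h1 h2 using 2
        exact (Set.image_eq_range ((Int.castAddHom ℚ).compLeft _) _).symm)
      (by rw [Nat.card_coe_set_eq, Module.finrank_fin_fun]; exact ncard_Spart_le h1 h2)
  refine ⟨fun i j => disjoint_Spart, ?_, fun i h1 h2 => ?_, fun i h1 h2 => (key i h1 h2).1⟩
  · refine (Set.iUnion₂_subset fun i hi => Spart_subset_LatticePts hi.1 hi.2).antisymm
      fun x hx => ?_
    simpa only [Set.mem_iUnion₂, exists_prop] using exists_mem_Spart hx
  · simpa using (key i h1 h2).2

/-- The lattice points of `Δ¹ × 2·Δⁿ` are partitioned into the `n+1` pairwise disjoint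
sets `S_1, …, S_{n+1}`, each of cardinality `n+2` and affinely independent. -/
theorem stmt_14 (n : ℕ) (hn : 1 ≤ n) :
    (∀ i j, 1 ≤ i → i ≤ n + 1 → 1 ≤ j → j ≤ n + 1 → i ≠ j →
      Disjoint (Spart n i) (Spart n j)) ∧
    (⋃ i ∈ Set.Icc 1 (n + 1), Spart n i) = LatticePts n ∧
    (∀ i, 1 ≤ i → i ≤ n + 1 → (Spart n i).ncard = n + 2) ∧
    (∀ i, 1 ≤ i → i ≤ n + 1 →
      AffineIndependent ℚ
        (fun p : Spart n i => fun l => ((p : Fin (n + 1) → ℤ) l : ℚ))) :=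
  stmt_14_general n
end
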